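/- arXiv:2409.18818 — 2 statements merged into one kernel-verified Lean document; each statement's English description precedes it below -/
import Mathlib

section
/- Let $\{Y_i\}$ be a martingale difference sequence with $Y_i\le b$ a.s. and $E[Y_i^2\mid\mathscr{Y}_{i-1}]\le k$ a.s. for constants $b,k>0$. Then for every $0<\epsilon<b$, $\mathrm{Prob}\left(\frac{1}{n}\sum_{i=1}^n Y_i\ge\epsilon\right)\le \exp\left(-n\,\mathcal{H}\left(\frac{b\epsilon+k}{b^2+k}\,\Big|\,\frac{k}{b^2+k}\right)\right)$, where $\mathcal{H}(p|p')=p\ln(p/p')+(1-p)\ln((1-p)/(1-p'))$. -/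
open MeasureTheory Filter

/-- Binary relative entropy `H(p|p')`. -/
noncomputable def binH (p p' : ℝ) : ℝ :=
  p * Real.log (p / p') + (1 - p) * Real.log ((1 - p) / (1 - p'))

section Aux

/-- `exp x - 1 - x - x^2/2` is monotone. -/
lemma expF_mono : Monotone (fun x : ℝ => Real.exp x - 1 - x - x^2/2) := by
  have hd : ∀ x : ℝ, HasDerivAt (fun x : ℝ => Real.exp x - 1 - x - x^2/2)
      (Real.exp x - 1 - x) x := by
    intro x
    have h := (((Real.hasDerivAt_exp x).sub_const 1).sub (hasDerivAt_id x)).sub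
      ((hasDerivAt_pow 2 x).div_const 2)
    refine h.congr_deriv ?_
    simp
  apply monotone_of_deriv_nonneg
  · exact fun x => (hd x).differentiableAt
  · intro x
    rw [(hd x).deriv]
    nlinarith [Real.add_one_le_exp x]

lemma h3_nonneg {y : ℝ} (hy : 0 ≤ y) : 0 ≤ y * Real.exp y - 2 * Real.exp y + y + 2 := by
  have hd : ∀ x : ℝ, HasDerivAt (fun x : ℝ => x * Real.exp x - 2 * Real.exp x + x + 2)
      ((x - 1) * Real.exp x + 1) x := by
    intro x
    have h := ((((hasDerivAt_id x).mul (Real.hasDerivAt_exp x)).sub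
      ((Real.hasDerivAt_exp x).const_mul 2)).add (hasDerivAt_id x)).add_const 2
    refine h.congr_deriv ?_
    simp only [id]
    ring
  have hmono : MonotoneOn (fun x : ℝ => x * Real.exp x - 2 * Real.exp x + x + 2)
      (Set.Ici (0:ℝ)) := by
    apply monotoneOn_of_deriv_nonneg (convex_Ici 0)
    · exact (Continuous.continuousOn (by continuity))
    · exact fun x _ => ((hd x).differentiableAt).differentiableWithinAt
    · intro x hx
      rw [interior_Ici] at hx
      rw [(hd x).deriv]
      have h1 : (1:ℝ) - x ≤ Real.exp (-x) := by linarith [Real.add_one_le_exp (-x)]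
      have h2 : Real.exp (-x) * Real.exp x = 1 := by
        rw [← Real.exp_add]; simp
      nlinarith [Real.exp_pos x]
  have := hmono (Set.self_mem_Ici) (Set.mem_Ici.mpr hy) hy
  simpa using this

/-- monotonicity of `(exp y - 1 - y)/y^2` on positive reals. -/
lemma fdiv_mono : MonotoneOn (fun y : ℝ => (Real.exp y - 1 - y)/y^2) (Set.Ioi (0:ℝ)) := by
  have hd : ∀ y : ℝ, y ≠ 0 → HasDerivAt (fun y : ℝ => (Real.exp y - 1 - y)/y^2)
      (((Real.exp y - 1) * y^2 - (Real.exp y - 1 - y) * (2*y)) / (y^2)^2) y := by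
    intro y hy
    have hnum : HasDerivAt (fun y : ℝ => Real.exp y - 1 - y) (Real.exp y - 1) y := by
      have h := ((Real.hasDerivAt_exp y).sub_const 1).sub (hasDerivAt_id y)
      exact h
    have hden : HasDerivAt (fun y : ℝ => y^2) (2*y) y := by
      have := hasDerivAt_pow 2 y
      refine this.congr_deriv ?_
      simp
    exact hnum.div hden (pow_ne_zero 2 hy)
  apply monotoneOn_of_deriv_nonneg (convex_Ioi 0)
  · apply ContinuousOn.div
    · exact Continuous.continuousOn (by continuity)
    · exact Continuous.continuousOn (by continuity)
    · intro y hy; exact pow_ne_zero 2 (ne_of_gt hy)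
  · intro y hy
    rw [interior_Ioi] at hy
    exact ((hd y (ne_of_gt hy)).differentiableAt).differentiableWithinAt
  · intro y hy
    rw [interior_Ioi] at hy
    rw [(hd y (ne_of_gt hy)).deriv]
    apply div_nonneg _ (by positivity)
    have h3 := h3_nonneg (le_of_lt hy)
    nlinarith [mul_nonneg (le_of_lt hy) h3]

lemma keyL {s u : ℝ} (hs : 0 < s) (hu : u ≤ s) :
    Real.exp u ≤ 1 + u + u^2 * ((Real.exp s - 1 - s)/s^2) := by
  have hsq : s^2/2 ≤ Real.exp s - 1 - s := by
    have := expF_mono (le_of_lt hs)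
    simp only [Real.exp_zero] at this
    norm_num at this
    linarith
  rcases le_or_gt u 0 with hu0 | hu0
  · have h1 : Real.exp u - 1 - u - u^2/2 ≤ 0 := by
      have := expF_mono hu0
      simp only [Real.exp_zero] at this
      norm_num at this
      linarith
    have h2 : (1:ℝ)/2 ≤ (Real.exp s - 1 - s)/s^2 := by
      rw [div_le_div_iff₀ (by norm_num) (by positivity)]
      nlinarith
    nlinarith [sq_nonneg u]
  · have hmono := fdiv_mono (Set.mem_Ioi.mpr hu0) (Set.mem_Ioi.mpr hs) hu
    simp only at hmono
    have hu2 : (0:ℝ) < u^2 := by positivity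
    have : Real.exp u - 1 - u ≤ u^2 * ((Real.exp s - 1 - s)/s^2) := by
      calc Real.exp u - 1 - u = u^2 * ((Real.exp u - 1 - u)/u^2) := by
            field_simp
        _ ≤ u^2 * ((Real.exp s - 1 - s)/s^2) := by
            apply mul_le_mul_of_nonneg_left hmono (le_of_lt hu2)
    linarith

lemma bennett_scalar {t m x bb : ℝ} (ht : 0 < t) (hmb : m < bb) (hx : x ≤ bb) :
    Real.exp (t*x) ≤ Real.exp (t*m) * (1 + t*(x - m)) +
      (Real.exp (t*m) * t^2 * ((Real.exp (t*(bb-m)) - 1 - t*(bb-m))/(t*(bb-m))^2)) * (x-m)^2 := by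
  set s := t*(bb - m) with hsdef
  have hs : 0 < s := mul_pos ht (by linarith)
  have hu : t*(x - m) ≤ s := by
    rw [hsdef]
    apply mul_le_mul_of_nonneg_left (by linarith) (le_of_lt ht)
  have key := keyL hs hu
  have hexp : Real.exp (t*x) = Real.exp (t*m) * Real.exp (t*(x-m)) := by
    rw [← Real.exp_add]; ring_nf
  rw [hexp]
  have h2 := mul_le_mul_of_nonneg_left key (le_of_lt (Real.exp_pos (t*m)))
  calc Real.exp (t*m) * Real.exp (t*(x-m))
      ≤ Real.exp (t*m) * (1 + t*(x-m) + (t*(x-m))^2 * ((Real.exp s - 1 - s)/s^2)) := h2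
    _ = Real.exp (t*m) * (1 + t*(x - m)) +
        (Real.exp (t*m) * t^2 * ((Real.exp s - 1 - s)/s^2)) * (x-m)^2 := by ring

lemma M_eq {b k t : ℝ} (hb : 0 < b) (hk : 0 < k) (ht : 0 < t) :
    Real.exp (t*(-(k/b))) * (1 - t*(-(k/b))) +
      (Real.exp (t*(-(k/b))) * t^2 *
        ((Real.exp (t*(b-(-(k/b)))) - 1 - t*(b-(-(k/b))))/(t*(b-(-(k/b))))^2)) * (k + (-(k/b))^2)
      = (b^2*Real.exp (t*(-(k/b))) + k*Real.exp (t*b))/(b^2+k) := by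
  have hbne : b ≠ 0 := ne_of_gt hb
  have hbk : b^2 + k ≠ 0 := by positivity
  have hbm : b - (-(k/b)) = (b^2+k)/b := by field_simp; ring
  have hsne : t*(b-(-(k/b))) ≠ 0 := by
    rw [hbm]; positivity
  have hexp : Real.exp (t*b) = Real.exp (t*(-(k/b))) * Real.exp (t*(b-(-(k/b)))) := by
    rw [← Real.exp_add]; ring_nf
  rw [hexp, hbm] at *
  set A := Real.exp (t*(-(k/b)))
  set E := Real.exp (t*((b^2+k)/b))
  have htne : t ≠ 0 := ne_of_gt ht
  field_simp
  ring

lemma final_alg {b k ε p p' s t : ℝ} (hb : 0 < b) (hk : 0 < k) (hε : 0 < ε) (hεb : ε < b)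
    (hp' : p' = k/(b^2+k)) (hp : p = (b*ε+k)/(b^2+k))
    (hs : s = Real.log ((p*(1-p'))/((1-p)*p'))) (ht : t = s*b/(b^2+k)) :
    (b^2*Real.exp (t*(-(k/b))) + k*Real.exp (t*b))/(b^2+k) * Real.exp (-(t*ε))
      = Real.exp (-(binH p p')) := by
  have hD : (0:ℝ) < b^2 + k := by positivity
  have hDne : b^2 + k ≠ 0 := ne_of_gt hD
  have hbne : b ≠ 0 := ne_of_gt hb
  have hp'0 : 0 < p' := by rw [hp']; positivity
  have hp0 : 0 < p := by rw [hp]; positivity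
  have hp'1 : p' < 1 := by rw [hp']; rw [div_lt_one hD]; nlinarith
  have hp1 : p < 1 := by rw [hp]; rw [div_lt_one hD]; nlinarith
  have h1p : 0 < 1 - p := by linarith
  have h1p' : 0 < 1 - p' := by linarith
  have hratio : 0 < (p*(1-p'))/((1-p)*p') := by positivity
  have hes : Real.exp s = (p*(1-p'))/((1-p)*p') := by rw [hs]; exact Real.exp_log hratio
  have hsplit : t*b = t*(-(k/b)) + (s*b/(b^2+k))*((b^2+k)/b) := by
    rw [ht]; field_simp; ring
  have hsb : (s*b/(b^2+k))*((b^2+k)/b) = s := by field_simp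
  have hexp : Real.exp (t*b) = Real.exp (t*(-(k/b))) * Real.exp s := by
    rw [hsplit, hsb, Real.exp_add]
  have hbε : b^2 - b*ε ≠ 0 := by nlinarith
  have h1p'eq : 1 - p' = b^2/(b^2+k) := by rw [hp']; field_simp; ring
  have h1peq : 1 - p = (b^2 - b*ε)/(b^2+k) := by rw [hp]; field_simp; ring
  have hM2 : (b^2 + k * Real.exp s)/(b^2+k) = (1-p')/(1-p) := by
    rw [hes, h1p'eq, h1peq, hp, hp']
    have hbe : b - ε ≠ 0 := by linarith
    field_simp
    ring
  have htm : t*(-(k/b)) = -(s*p') := by rw [ht, hp']; field_simp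
  have htε : t*ε = s*(p - p') := by rw [ht, hp, hp']; field_simp; ring
  have lhs_eq : (b^2*Real.exp (t*(-(k/b))) + k*Real.exp (t*b))/(b^2+k)
      = Real.exp (t*(-(k/b))) * ((1-p')/(1-p)) := by
    rw [hexp, ← hM2]; field_simp
  rw [lhs_eq, htm]
  have hfrac : (1-p')/(1-p) = Real.exp (Real.log (1-p') - Real.log (1-p)) := by
    rw [Real.exp_sub, Real.exp_log h1p', Real.exp_log h1p]
  rw [hfrac, ← Real.exp_add, ← Real.exp_add]
  congr 1
  have hsexp : s = Real.log p + Real.log (1-p') - (Real.log (1-p) + Real.log p') := by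
    rw [hs, Real.log_div (by positivity) (by positivity),
      Real.log_mul (ne_of_gt hp0) (ne_of_gt h1p'), Real.log_mul (ne_of_gt h1p) (ne_of_gt hp'0)]
  have hbinH : binH p p' = p*(Real.log p - Real.log p')
      + (1-p)*(Real.log (1-p) - Real.log (1-p')) := by
    rw [binH, Real.log_div (ne_of_gt hp0) (ne_of_gt hp'0),
      Real.log_div (ne_of_gt h1p) (ne_of_gt h1p')]
  rw [htε, hbinH, hsexp]
  ring

end Aux

/-- Concentration inequality for bounded martingale differences. -/
theorem stmt1
    {Ω : Type*} {m0 : MeasurableSpace Ω} {μ : Measure Ω} [IsProbabilityMeasure μ]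
    (ℱ : Filtration ℕ m0) (Y : ℕ → Ω → ℝ)
    (hadapt : ∀ i, StronglyMeasurable[ℱ (i + 1)] (Y i))
    (hint : ∀ i, Integrable (Y i) μ)
    (hint2 : ∀ i, Integrable (fun ω => (Y i ω) ^ 2) μ)
    (hmd : ∀ i, μ[Y i | ℱ i] =ᵐ[μ] 0)
    {b k : ℝ} (hb : 0 < b) (hk : 0 < k)
    (hYb : ∀ i, ∀ᵐ ω ∂μ, Y i ω ≤ b)
    (hY2 : ∀ i, ∀ᵐ ω ∂μ, (μ[fun ω' => (Y i ω') ^ 2 | ℱ i]) ω ≤ k)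
    (ε : ℝ) (hε : 0 < ε) (hεb : ε < b) (n : ℕ) :
    (μ {ω | ε ≤ (n : ℝ)⁻¹ * ∑ i ∈ Finset.range n, Y i ω}).toReal ≤
      Real.exp (-(n : ℝ) * binH ((b * ε + k) / (b ^ 2 + k)) (k / (b ^ 2 + k))) := by
  have hD : (0:ℝ) < b^2 + k := by positivity
  set p' : ℝ := k/(b^2+k) with hp'def
  set p : ℝ := (b*ε+k)/(b^2+k) with hpdef
  have hpp' : p' < p := by
    rw [hpdef, hp'def, div_lt_div_iff₀ hD hD]
    nlinarith [mul_pos (mul_pos hb hε) hD]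
  have hp'0 : 0 < p' := by rw [hp'def]; positivity
  have hp1 : p < 1 := by rw [hpdef, div_lt_one hD]; nlinarith
  have h1p : 0 < 1 - p := by linarith
  set s : ℝ := Real.log ((p*(1-p'))/((1-p)*p')) with hsdef
  have hs0 : 0 < s := by
    rw [hsdef]
    apply Real.log_pos
    rw [one_lt_div (by positivity)]
    nlinarith
  set t : ℝ := s*b/(b^2+k) with htdef
  have ht0 : 0 < t := by
    rw [htdef]; positivity
  set M : ℝ := (b^2*Real.exp (t*(-(k/b))) + k*Real.exp (t*b))/(b^2+k) with hMdef
  have hM0 : 0 < M := by rw [hMdef]; positivity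
  -- the one-step conditional bound
  have hgint : ∀ i, Integrable (fun ω => Real.exp (t * Y i ω)) μ := by
    intro i
    apply Integrable.mono' (integrable_const (Real.exp (t*b)))
    · exact ((Real.continuous_exp.comp_stronglyMeasurable
        ((hadapt i).const_mul t)).mono (ℱ.le (i+1))).aestronglyMeasurable
    · filter_upwards [hYb i] with ω hω
      rw [Real.norm_eq_abs, abs_of_pos (Real.exp_pos _)]
      exact Real.exp_le_exp.mpr (mul_le_mul_of_nonneg_left hω ht0.le)
  have hstep : ∀ i, (μ[fun ω => Real.exp (t * Y i ω) | ℱ i]) ≤ᵐ[μ] fun _ => M := by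
    intro i
    set m : ℝ := -(k/b) with hmdef
    have hmb : m < b := by
      rw [hmdef]; have : 0 < k/b := by positivity
      linarith
    set c2 : ℝ := Real.exp (t*m) * t^2 *
        ((Real.exp (t*(b-m)) - 1 - t*(b-m))/(t*(b-m))^2) with hc2def
    have hc2 : 0 ≤ c2 := by
      rw [hc2def]
      apply mul_nonneg (by positivity)
      apply div_nonneg _ (by positivity)
      linarith [Real.add_one_le_exp (t*(b-m))]
    set c0 : ℝ := Real.exp (t*m)*(1 - t*m) + c2*m^2 with hc0def
    set c1 : ℝ := Real.exp (t*m)*t - 2*c2*m with hc1def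
    have hqint : Integrable ((fun _ => c0) + (c1 • Y i) + (c2 • fun ω => (Y i ω)^2)) μ :=
      (((integrable_const c0).add ((hint i).smul c1)).add ((hint2 i).smul c2))
    have hle : (fun ω => Real.exp (t * Y i ω)) ≤ᵐ[μ]
        ((fun _ => c0) + (c1 • Y i) + (c2 • fun ω => (Y i ω)^2)) := by
      filter_upwards [hYb i] with ω hω
      have hbs := bennett_scalar (m := m) (x := Y i ω) (bb := b) ht0 hmb hω
      simp only [Pi.add_apply, Pi.smul_apply, smul_eq_mul]
      calc Real.exp (t * Y i ω)
          ≤ Real.exp (t*m) * (1 + t*(Y i ω - m)) + c2 * (Y i ω - m)^2 := hbs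
        _ = c0 + c1 * Y i ω + c2 * (Y i ω)^2 := by rw [hc0def, hc1def]; ring
    have hcm := condExp_mono (m := ℱ i) (hgint i) hqint hle
    have hce : μ[(fun _ => c0) + (c1 • Y i) + (c2 • fun ω => (Y i ω)^2) | ℱ i]
        =ᵐ[μ] (fun _ => c0) + c1 • (μ[Y i | ℱ i]) + c2 • (μ[(fun ω => (Y i ω)^2) | ℱ i]) := by
      refine (condExp_add ((integrable_const c0).add ((hint i).smul c1)) ((hint2 i).smul c2) (ℱ i)).trans ?_
      refine EventuallyEq.add ?_ (condExp_smul c2 _ _)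
      refine (condExp_add (integrable_const c0) ((hint i).smul c1) (ℱ i)).trans ?_
      refine EventuallyEq.add ?_ (condExp_smul c1 _ _)
      rw [condExp_const (ℱ.le i)]
    have hMeq : c0 + c2 * k = M := by
      rw [hMdef, hc0def, hc2def, hmdef]
      have := M_eq hb hk ht0
      linarith [this]
    refine hcm.trans (hce.trans_le ?_)
    filter_upwards [hmd i, hY2 i] with ω h0 h2
    simp only [Pi.add_apply, Pi.smul_apply, smul_eq_mul, h0, Pi.zero_apply, mul_zero, add_zero]
    calc c0 + c2 * (μ[fun ω => (Y i ω)^2 | ℱ i]) ω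
        ≤ c0 + c2 * k := by
          have := mul_le_mul_of_nonneg_left h2 hc2
          linarith
      _ = M := hMeq
  -- strong measurability and integrability of partial exponentials
  have hfmeas : ∀ N, StronglyMeasurable[ℱ N]
      (fun ω => Real.exp (t * ∑ i ∈ Finset.range N, Y i ω)) := by
    intro N
    apply Real.continuous_exp.comp_stronglyMeasurable
    apply StronglyMeasurable.const_mul
    apply Finset.stronglyMeasurable_fun_sum
    intro i hi
    exact (hadapt i).mono (ℱ.mono (Nat.succ_le_of_lt (Finset.mem_range.mp hi)))
  have hfbd : ∀ N, ∀ᵐ ω ∂μ, ‖Real.exp (t * ∑ i ∈ Finset.range N, Y i ω)‖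
      ≤ Real.exp (t * (N * b)) := by
    intro N
    filter_upwards [ae_all_iff.mpr hYb] with ω hω
    rw [Real.norm_eq_abs, abs_of_pos (Real.exp_pos _)]
    apply Real.exp_le_exp.mpr
    apply mul_le_mul_of_nonneg_left _ ht0.le
    calc ∑ i ∈ Finset.range N, Y i ω ≤ ∑ i ∈ Finset.range N, b :=
          Finset.sum_le_sum (fun i _ => hω i)
      _ = N * b := by rw [Finset.sum_const, Finset.card_range, nsmul_eq_mul]
  have hfint : ∀ N, Integrable (fun ω => Real.exp (t * ∑ i ∈ Finset.range N, Y i ω)) μ := by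
    intro N
    exact Integrable.mono' (integrable_const _)
      ((hfmeas N).mono (ℱ.le N)).aestronglyMeasurable (hfbd N)
  -- the mgf induction
  have hmgf : ∀ N, ∫ ω, Real.exp (t * ∑ i ∈ Finset.range N, Y i ω) ∂μ ≤ M ^ N := by
    intro N
    induction N with
    | zero => simp
    | succ N ih =>
      have hsplit : (fun ω => Real.exp (t * ∑ i ∈ Finset.range (N+1), Y i ω))
          = (fun ω => Real.exp (t * ∑ i ∈ Finset.range N, Y i ω)) *
            (fun ω => Real.exp (t * Y N ω)) := by
        funext ω
        simp only [Pi.mul_apply]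
        rw [Finset.sum_range_succ, mul_add, Real.exp_add]
      have hfgint : Integrable ((fun ω => Real.exp (t * ∑ i ∈ Finset.range N, Y i ω)) *
          (fun ω => Real.exp (t * Y N ω))) μ := by
        rw [← hsplit]; exact hfint (N+1)
      have hpull := condExp_mul_of_stronglyMeasurable_left (hfmeas N) hfgint (hgint N)
      calc ∫ ω, Real.exp (t * ∑ i ∈ Finset.range (N+1), Y i ω) ∂μ
          = ∫ ω, ((fun ω => Real.exp (t * ∑ i ∈ Finset.range N, Y i ω)) *
              (fun ω => Real.exp (t * Y N ω))) ω ∂μ := by rw [hsplit]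
        _ = ∫ ω, (μ[(fun ω => Real.exp (t * ∑ i ∈ Finset.range N, Y i ω)) *
              (fun ω => Real.exp (t * Y N ω)) | ℱ N]) ω ∂μ :=
            (integral_condExp (ℱ.le N)).symm
        _ = ∫ ω, Real.exp (t * ∑ i ∈ Finset.range N, Y i ω) *
              (μ[fun ω => Real.exp (t * Y N ω) | ℱ N]) ω ∂μ :=
            integral_congr_ae hpull
        _ ≤ ∫ ω, Real.exp (t * ∑ i ∈ Finset.range N, Y i ω) * M ∂μ := by
            apply integral_mono_ae (integrable_condExp.congr hpull) ((hfint N).mul_const M)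
            filter_upwards [hstep N] with ω hω
            exact mul_le_mul_of_nonneg_left hω (Real.exp_nonneg _)
        _ = (∫ ω, Real.exp (t * ∑ i ∈ Finset.range N, Y i ω) ∂μ) * M :=
            integral_mul_const M _
        _ ≤ M ^ N * M := mul_le_mul_of_nonneg_right ih hM0.le
        _ = M ^ (N+1) := (pow_succ M N).symm
  -- conclude
  rcases Nat.eq_zero_or_pos n with hn | hn
  · subst hn
    have hempty : {ω | ε ≤ ((0:ℕ) : ℝ)⁻¹ * ∑ i ∈ Finset.range 0, Y i ω} = ∅ := by
      ext ω
      simp [hε.not_ge]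
    rw [hempty]
    simp [Real.exp_nonneg]
  · have hnR : (0:ℝ) < n := Nat.cast_pos.mpr hn
    have hset : {ω | ε ≤ (n : ℝ)⁻¹ * ∑ i ∈ Finset.range n, Y i ω}
        = {ω | (n:ℝ)*ε ≤ ∑ i ∈ Finset.range n, Y i ω} := by
      ext ω
      simp only [Set.mem_setOf_eq]
      exact le_inv_mul_iff₀ hnR
    rw [hset]
    have markov := ProbabilityTheory.measure_ge_le_exp_mul_mgf
      (X := fun ω => ∑ i ∈ Finset.range n, Y i ω) (μ := μ) (t := t)
      ((n:ℝ)*ε) ht0.le (hfint n)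
    refine markov.trans ?_
    have hmgfle : ProbabilityTheory.mgf (fun ω => ∑ i ∈ Finset.range n, Y i ω) μ t ≤ M ^ n :=
      hmgf n
    calc Real.exp (-t * ((n:ℝ)*ε)) *
          ProbabilityTheory.mgf (fun ω => ∑ i ∈ Finset.range n, Y i ω) μ t
        ≤ Real.exp (-t * ((n:ℝ)*ε)) * M ^ n := by
          exact mul_le_mul_of_nonneg_left hmgfle (Real.exp_nonneg _)
      _ = (M * Real.exp (-(t*ε))) ^ n := by
          rw [mul_pow, ← Real.exp_nat_mul]
          rw [mul_comm (M ^ n)]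
          congr 1
          ring
      _ = Real.exp (-(binH p p')) ^ n := by
          rw [final_alg hb hk hε hεb hp'def hpdef hsdef htdef]
      _ = Real.exp (-(n:ℝ) * binH p p') := by
          rw [← Real.exp_nat_mul]
          congr 1
          ring
end

section
/- Let $\mathcal{X}\subset\mathbb{R}^n$ be compact and $R(V)=\inf_{x\in\mathcal{X}}V(x)$ on $C(\mathcal{X})$. Then $R$ is Hadamard directionally differentiable at every $\Gamma\in C(\mathcal{X})$, and for every direction $V\in C(\mathcal{X})$, $R'_{\mathscr{H}}(\Gamma,V)=\inf_{x\in\tilde{\Lambda}(\Gamma)}V(x)$, where $\tilde{\Lambda}(\Gamma)=\arg\min_{x\in\mathcal{X}}\Gamma(x)$. -/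
open Filter

/-- Hadamard directional differentiability of the infimum functional
`R(V) = inf_{x ∈ 𝒳} V(x)` on `C(𝒳)`: for every `Γ` and direction `V`,
`R'_{ℋ}(Γ, V) = inf_{x ∈ argmin Γ} V(x)`. -/
theorem stmt17 {n : ℕ} (K : Set (EuclideanSpace ℝ (Fin n)))
    [CompactSpace K] [Nonempty K]
    (Γ V : C(K, ℝ)) (t : ℕ → ℝ) (W : ℕ → C(K, ℝ))
    (ht_pos : ∀ m, 0 < t m) (ht : Tendsto t atTop (nhds 0))
    (hW : Tendsto W atTop (nhds V)) :
    Tendsto (fun m : ℕ =>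
        ((⨅ x : K, (Γ + t m • W m) x) - ⨅ x : K, Γ x) / t m)
      atTop (nhds (⨅ x : {y : K // Γ y = ⨅ z : K, Γ z}, V x)) := by
  -- Γ attains its minimum
  obtain ⟨xg, -, hxg⟩ := isCompact_univ.exists_isMinOn Set.univ_nonempty
    Γ.continuous.continuousOn
  have hxg' : ∀ y : K, Γ xg ≤ Γ y := fun y => hxg (Set.mem_univ y)
  set MΓ : ℝ := ⨅ x : K, Γ x with hMΓ
  have hbdd : BddBelow (Set.range fun y : K => Γ y) :=
    ⟨Γ xg, Set.forall_mem_range.2 hxg'⟩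
  have hMle : ∀ y : K, MΓ ≤ Γ y := fun y => ciInf_le hbdd y
  have hxgM : Γ xg = MΓ := le_antisymm (le_ciInf hxg') (hMle xg)
  -- the argmin set
  set A : Set K := {y : K | Γ y = MΓ} with hA
  have hAclosed : IsClosed A := isClosed_eq Γ.continuous continuous_const
  have hAne : A.Nonempty := ⟨xg, hxgM⟩
  -- V attains its minimum L over A
  obtain ⟨x₀, hx₀A, hx₀min⟩ := hAclosed.isCompact.exists_isMinOn hAne
    V.continuous.continuousOn
  have hx₀min' : ∀ y ∈ A, V x₀ ≤ V y := fun y hy => hx₀min hy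
  have hAnon : Nonempty {y : K // Γ y = MΓ} := ⟨⟨x₀, hx₀A⟩⟩
  set L : ℝ := ⨅ x : {y : K // Γ y = MΓ}, V x with hL
  have hLbdd : BddBelow (Set.range fun x : {y : K // Γ y = MΓ} => V x.1) := by
    refine ⟨V x₀, ?_⟩
    rintro r ⟨⟨y, hy⟩, rfl⟩
    exact hx₀min' y hy
  have hLeq : L = V x₀ := le_antisymm (ciInf_le hLbdd ⟨x₀, hx₀A⟩)
    (le_ciInf fun y => hx₀min' y.1 y.2)
  -- pointwise evaluation of the perturbed map
  have happly : ∀ (m : ℕ) (x : K), (Γ + t m • W m) x = Γ x + t m * W m x := by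
    intro m x
    simp [ContinuousMap.add_apply, ContinuousMap.smul_apply, smul_eq_mul]
  -- pointwise norm bounds
  have hb1 : ∀ (m : ℕ) (x : K), V x - ‖W m - V‖ ≤ W m x := by
    intro m x
    have h := ContinuousMap.norm_coe_le_norm (W m - V) x
    rw [ContinuousMap.sub_apply, Real.norm_eq_abs, abs_le] at h
    linarith [h.1]
  have hb2 : ∀ (m : ℕ) (x : K), -‖W m‖ ≤ W m x := by
    intro m x
    have h := ContinuousMap.norm_coe_le_norm (W m) x
    rw [Real.norm_eq_abs, abs_le] at h
    linarith [h.1]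
  -- the perturbed infimum is bounded below
  have hbdd' : ∀ m : ℕ, BddBelow (Set.range fun x : K => (Γ + t m • W m) x) := by
    intro m
    refine ⟨MΓ - t m * ‖W m‖, Set.forall_mem_range.2 fun x => ?_⟩
    rw [happly m x]
    have h1 := hMle x
    have h2 : t m * (-‖W m‖) ≤ t m * W m x :=
      mul_le_mul_of_nonneg_left (hb2 m x) (ht_pos m).le
    nlinarith
  -- convergences
  have hnorm : Tendsto (fun m => ‖W m - V‖) atTop (nhds 0) := by
    rw [tendsto_iff_norm_sub_tendsto_zero] at hW
    exact hW
  have heval : Tendsto (fun m => W m x₀) atTop (nhds (V x₀)) := by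
    rw [tendsto_iff_norm_sub_tendsto_zero]
    refine squeeze_zero (fun m => norm_nonneg _) (fun m => ?_) hnorm
    have h := ContinuousMap.norm_coe_le_norm (W m - V) x₀
    rwa [ContinuousMap.sub_apply] at h
  -- upper bound : quotient m ≤ W m x₀
  have hupper : ∀ m : ℕ,
      ((⨅ x : K, (Γ + t m • W m) x) - MΓ) / t m ≤ W m x₀ := by
    intro m
    rw [div_le_iff₀ (ht_pos m)]
    have h1 : (⨅ x : K, (Γ + t m • W m) x) ≤ (Γ + t m • W m) x₀ :=
      ciInf_le (hbdd' m) x₀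
    rw [happly m x₀] at h1
    have h2 : Γ x₀ = MΓ := hx₀A
    nlinarith
  rw [tendsto_order]
  constructor
  · -- lower bound
    intro a ha
    -- intermediate values
    set a'' : ℝ := a + (L - a) / 3 with ha''
    set a' : ℝ := a + 2 * (L - a) / 3 with ha'
    have haa'' : a < a'' := by rw [ha'']; linarith
    have ha''a' : a'' < a' := by rw [ha'', ha']; linarith
    have ha'L : a' < L := by rw [ha']; linarith
    set S : Set K := {x : K | V x ≤ a'} with hS
    have hSclosed : IsClosed S := isClosed_le V.continuous continuous_const
    -- the "good" eventual bound on inner points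
    have hE1 : ∀ᶠ m in atTop, ‖W m - V‖ < a' - a'' :=
      hnorm.eventually_lt_const (by linarith)
    rcases Set.eq_empty_or_nonempty S with hSe | hSne
    · -- S empty : V > a' everywhere
      filter_upwards [hE1] with m hm
      have key : MΓ + t m * a'' ≤ ⨅ x : K, (Γ + t m • W m) x := by
        refine le_ciInf fun x => ?_
        rw [happly m x]
        have hx : a' < V x := by
          by_contra h
          exact absurd (Set.eq_empty_iff_forall_notMem.1 hSe x) (not_not.2 (le_of_not_gt h))
        have h1 : a'' ≤ W m x := by
          have := hb1 m x
          linarith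
        have h2 : t m * a'' ≤ t m * W m x :=
          mul_le_mul_of_nonneg_left h1 (ht_pos m).le
        have := hMle x
        linarith
      rw [lt_div_iff₀ (ht_pos m)]
      have : t m * a < t m * a'' := (mul_lt_mul_iff_right₀ (ht_pos m)).2 haa''
      linarith
    · -- S nonempty : there is a positive gap δ on S
      obtain ⟨z, hzS, hzmin⟩ := (hSclosed.isCompact).exists_isMinOn hSne
        Γ.continuous.continuousOn
      set δ : ℝ := Γ z - MΓ with hδdef
      have hδ : 0 < δ := by
        rw [hδdef]
        rcases lt_or_eq_of_le (hMle z) with h | h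
        · linarith
        · exfalso
          have hzA : z ∈ A := h.symm
          have h1 := hx₀min' z hzA
          have h2 : V z ≤ a' := hzS
          rw [← hLeq] at h1
          linarith
      have hE2 : ∀ᶠ m in atTop, ‖W m‖ < ‖V‖ + 1 := by
        have : Tendsto (fun m => ‖W m‖) atTop (nhds ‖V‖) := hW.norm
        exact this.eventually_lt_const (by linarith)
      have hE3 : ∀ᶠ m in atTop, t m * (|a''| + ‖V‖ + 1) < δ := by
        have h0 : Tendsto (fun m => t m * (|a''| + ‖V‖ + 1)) atTop (nhds 0) := by
          have := ht.mul_const (|a''| + ‖V‖ + 1)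
          simpa using this
        exact h0.eventually_lt_const hδ
      filter_upwards [hE1, hE2, hE3] with m hm1 hm2 hm3
      have key : MΓ + t m * a'' ≤ ⨅ x : K, (Γ + t m • W m) x := by
        refine le_ciInf fun x => ?_
        rw [happly m x]
        by_cases hx : x ∈ S
        · -- Γ x ≥ MΓ + δ, and t m * W m x ≥ -t m * ‖W m‖
          have h1 : Γ z ≤ Γ x := hzmin hx
          have h2 : t m * (-‖W m‖) ≤ t m * W m x :=
            mul_le_mul_of_nonneg_left (hb2 m x) (ht_pos m).le
          have h3 : t m * ‖W m‖ ≤ t m * (‖V‖ + 1) :=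
            mul_le_mul_of_nonneg_left hm2.le (ht_pos m).le
          have h4 : t m * a'' ≤ t m * |a''| :=
            mul_le_mul_of_nonneg_left (le_abs_self _) (ht_pos m).le
          have h5 : t m * (|a''| + ‖V‖ + 1) = t m * |a''| + t m * (‖V‖ + 1) := by ring
          nlinarith
        · have hx' : a' < V x := not_le.1 hx
          have h1 : a'' ≤ W m x := by
            have := hb1 m x
            linarith
          have h2 : t m * a'' ≤ t m * W m x :=
            mul_le_mul_of_nonneg_left h1 (ht_pos m).le
          have := hMle x
          linarith
      rw [lt_div_iff₀ (ht_pos m)]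
      have : t m * a < t m * a'' := (mul_lt_mul_iff_right₀ (ht_pos m)).2 haa''
      linarith
  · -- upper bound
    intro b hb
    have hb' : V x₀ < b := by rw [← hLeq]; exact hb
    filter_upwards [heval.eventually_lt_const hb'] with m hm
    exact lt_of_le_of_lt (hupper m) hm
end
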